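/- There is an orthogonal basis v_1, ..., v_m of V with h(v_i, v_i) = 1 for i < m, and h(v_m, v_m) = 1 if the norm map Q : A* → R* is surjective, while h(v_m, v_m) ∈ {1, ε} if Q(A*) = R*², where ε is a fixed non-square unit of R. -/

import Mathlib

/-!
Since `2` is a unit of the local ring `A`, non-degeneracy yields a vector of unit length in any
basis position (one of `u`, `v k`, `u + v k`, where `h u -` is the `k`-th coordinate), and
orthogonalising against it splits off a line; so `V` has an orthogonal basis whose lengths are
self-adjoint units, i.e. units of `R`. If every unit of `R` is a norm, rescaling makes all lengths
`1`. Otherwise Hensel's lemma and the finite residue field give `R* = R*² ∪ ε R*²`, so rescaling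
makes every length `1` or `ε`; two lengths `ε` become two lengths `1` under the rotation
`(s, t; -t, s)` with `ε (s² + t²) = 1`, and the one remaining `ε` is moved to the last position.
-/

open MulOpposite

/-- A `*`-hermitian form on a right `A`-module `V` (right modules are encoded as
modules over the opposite ring `Aᵐᵒᵖ`): it is additive and `A`-linear in the second
variable and satisfies `h v u = (h u v)*`. -/
structure HermitianForm (A V : Type*) [Ring A] [StarRing A] [AddCommGroup V]
    [Module Aᵐᵒᵖ V] where
  toFun : V → V → A
  add_right : ∀ u v w : V, toFun u (v + w) = toFun u v + toFun u w
  smul_right : ∀ (a : A) (u v : V), toFun u (op a • v) = toFun u v * a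
  conj_symm : ∀ u v : V, toFun v u = star (toFun u v)

namespace HermitianForm

variable {A V : Type*} [Ring A] [StarRing A] [AddCommGroup V] [Module Aᵐᵒᵖ V]

/-- Non-degeneracy: the map `u ↦ h u -` is a bijection of `V` onto the dual module. -/
def Nondeg (h : HermitianForm A V) : Prop :=
  ∀ φ : V →ₗ[Aᵐᵒᵖ] A, ∃! u : V, ∀ v : V, h.toFun u v = φ v

end HermitianForm

/-- A vector of the free module `V` of rank `m` is primitive if it belongs to a basis. -/
def IsPrimitive (A : Type*) {V : Type*} [Ring A] [AddCommGroup V] [Module Aᵐᵒᵖ V]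
    (m : ℕ) (v : V) : Prop :=
  ∃ (b : Module.Basis (Fin m) Aᵐᵒᵖ V) (i : Fin m), b i = v

namespace FiniteField

variable {F : Type*} [Field F] [Finite F]

theorem isSquare_mul_of_not_isSquare {a b : F} (ha : ¬IsSquare a) (hb : ¬IsSquare b) :
    IsSquare (a * b) := by
  classical
  cases nonempty_fintype F
  have ha0 : a ≠ 0 := by rintro rfl; exact ha IsSquare.zero
  have hb0 : b ≠ 0 := by rintro rfl; exact hb IsSquare.zero
  rw [← quadraticChar_one_iff_isSquare (mul_ne_zero ha0 hb0), map_mul,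
    quadraticChar_neg_one_iff_not_isSquare.mpr ha, quadraticChar_neg_one_iff_not_isSquare.mpr hb]
  norm_num

theorem exists_ne_zero_sq_add_sq_eq (hodd : Odd (Nat.card F)) {a : F} (ha : a ≠ 0) :
    ∃ x y : F, x ≠ 0 ∧ x ^ 2 + y ^ 2 = a := by
  cases nonempty_fintype F
  obtain ⟨x, y, hxy⟩ := exists_root_sum_quadratic (f := Polynomial.X ^ 2)
    (g := Polynomial.X ^ 2 - Polynomial.C a) (Polynomial.degree_X_pow 2)
    (Polynomial.degree_X_pow_sub_C (by norm_num) a)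
    (by rwa [← Nat.odd_iff, ← Nat.card_eq_fintype_card])
  simp only [Polynomial.eval_pow, Polynomial.eval_X, Polynomial.eval_sub,
    Polynomial.eval_C] at hxy
  by_cases hx : x = 0
  · refine ⟨y, x, fun hy => ha ?_, by linear_combination hxy⟩
    linear_combination -hxy + x * hx + y * hy
  · exact ⟨x, y, hx, by linear_combination hxy⟩

end FiniteField

namespace IsLocalRing

variable {R : Type*} [CommRing R] [IsLocalRing R]
  (hsq : ∀ x ∈ maximalIdeal R, ∃ y ∈ maximalIdeal R, (1 + y) ^ 2 = 1 + x)
include hsq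

theorem isSquare_of_isSquare_residue {r : R} (hr : IsUnit r) (h : IsSquare (residue R r)) :
    IsSquare r := by
  obtain ⟨c, hc⟩ := h
  obtain ⟨x, rfl⟩ := residue_surjective c
  have hx : IsUnit x := by
    rw [← residue_ne_zero_iff_isUnit] at hr ⊢
    rintro h0
    exact hr (by rw [hc, h0, mul_zero])
  obtain ⟨t, htx⟩ := hx.exists_left_inv
  have hmem : r * t * t - 1 ∈ maximalIdeal R := by
    have htx' : residue R t * residue R x = 1 := by rw [← map_mul, htx, map_one]
    rw [← residue_eq_zero_iff, map_sub, map_mul, map_mul, hc, map_one]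
    linear_combination (residue R x * residue R t + 1) * htx'
  obtain ⟨y, -, hy⟩ := hsq _ hmem
  exact ⟨x * (1 + y), by linear_combination (-x ^ 2) * hy - r * (t * x + 1) * htx⟩

theorem exists_mul_self_mul_eq_one_or_eq [Finite (ResidueField R)] {ε r : R} (hεu : IsUnit ε)
    (hε : ¬IsSquare ε) (hr : IsUnit r) :
    ∃ t : R, IsUnit t ∧ (t * t * r = 1 ∨ t * t * r = ε) := by
  by_cases hres : IsSquare (residue R r)
  · obtain ⟨u, hu⟩ := isSquare_of_isSquare_residue hsq hr hres
    obtain ⟨t, htu⟩ := (isUnit_of_mul_isUnit_left (hu ▸ hr)).exists_left_inv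
    exact ⟨t, .of_mul_eq_one _ htu, Or.inl (by linear_combination t * t * hu + (t * u + 1) * htu)⟩
  · have hεres : ¬IsSquare (residue R ε) := fun h => hε (isSquare_of_isSquare_residue hsq hεu h)
    have hrε := FiniteField.isSquare_mul_of_not_isSquare hres hεres
    rw [← map_mul] at hrε
    obtain ⟨u, hu⟩ := isSquare_of_isSquare_residue hsq (hr.mul hεu) hrε
    obtain ⟨t, htu⟩ := (isUnit_of_mul_isUnit_left (hu ▸ hr.mul hεu)).exists_left_inv
    refine ⟨ε * t, hεu.mul (.of_mul_eq_one _ htu), Or.inr ?_⟩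
    linear_combination (ε * t * t) * hu + ε * (t * u + 1) * htu

theorem exists_isUnit_mul_sq_add_sq_eq_one [Finite (ResidueField R)]
    (hodd : Odd (Nat.card (ResidueField R))) {ε : R} (hεu : IsUnit ε) :
    ∃ s t : R, IsUnit s ∧ ε * (s ^ 2 + t ^ 2) = 1 := by
  have hε0 : residue R ε ≠ 0 := (residue_ne_zero_iff_isUnit ε).mpr hεu
  obtain ⟨x, y, hx, hxy⟩ := FiniteField.exists_ne_zero_sq_add_sq_eq hodd (inv_ne_zero hε0)
  obtain ⟨s, rfl⟩ := residue_surjective x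
  obtain ⟨t, rfl⟩ := residue_surjective y
  have hres : residue R (ε * (s ^ 2 + t ^ 2)) = 1 := by
    rw [map_mul, map_add, map_pow, map_pow, hxy, mul_inv_cancel₀ hε0]
  have hunit : IsUnit (ε * (s ^ 2 + t ^ 2)) := by
    rw [← residue_ne_zero_iff_isUnit, hres]; exact one_ne_zero
  obtain ⟨τ, hτ⟩ := isSquare_of_isSquare_residue hsq hunit (by rw [hres]; exact IsSquare.one)
  obtain ⟨τ', hτ'⟩ := (isUnit_of_mul_isUnit_left (hτ ▸ hunit)).exists_left_inv
  refine ⟨s * τ', t * τ', ((residue_ne_zero_iff_isUnit s).mp hx).mul (.of_mul_eq_one _ hτ'), ?_⟩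
  linear_combination τ' ^ 2 * hτ + (τ' * τ + 1) * hτ'

end IsLocalRing

theorem exists_isUnit_algebraMap_eq_of_star_eq {A R : Type*} [Ring A] [StarRing A]
    [CommRing R] [IsLocalRing R] [Algebra R A] [Nontrivial A]
    (hfix : ∀ a : A, star a = a ↔ a ∈ Set.range (algebraMap R A)) {a : A} (ha : IsUnit a)
    (hsa : star a = a) : ∃ r : R, IsUnit r ∧ a = algebraMap R A r := by
  obtain ⟨r, rfl⟩ := (hfix a).mp hsa
  refine ⟨r, ?_, rfl⟩
  obtain ⟨u, hu⟩ := ha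
  have hinv : star (↑u⁻¹ : A) = ↑u⁻¹ := by
    refine (Units.inv_eq_of_mul_eq_one_left ?_).symm
    rw [hu, ← hsa, ← star_mul, ← hu, Units.mul_inv, star_one]
  obtain ⟨r', hr'⟩ := (hfix _).mp hinv
  have hker : r * r' - 1 ∈ IsLocalRing.maximalIdeal R :=
    IsLocalRing.le_maximalIdeal (RingHom.ker_ne_top (algebraMap R A))
      (by rw [RingHom.mem_ker, map_sub, map_mul, hr', ← hu, Units.mul_inv, map_one, sub_self])
  rw [← IsLocalRing.residue_eq_zero_iff, map_sub, map_one, sub_eq_zero] at hker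
  refine isUnit_of_mul_isUnit_left (y := r') ?_
  rw [← IsLocalRing.residue_ne_zero_iff_isUnit, hker]
  exact one_ne_zero

namespace Module.Basis

variable {S M ι : Type*} [Ring S] [AddCommGroup M] [Module S M]

theorem exists_update_of_isUnit_repr (v : Basis ι S M) (k : ι) (w : M)
    (hw : IsUnit (v.repr w k)) : ∃ v' : Basis ι S M, v' k = w ∧ ∀ j, j ≠ k → v' j = v j := by
  classical
  have hunit : IsUnit (1 + v.coord k (w - v k)) := by simpa using hw
  refine ⟨v.map (LinearEquiv.dilatransvection hunit), ?_, fun j hj => ?_⟩ <;>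
    simp [LinearEquiv.dilatransvection.apply, *]

theorem exists_rotate {R : Type*} [CommRing R] [Algebra R S] (v : Basis ι S M)
    {i j : ι} (hij : i ≠ j) {s t : R} (hs : IsUnit s) (hst : IsUnit (s ^ 2 + t ^ 2)) :
    ∃ v' : Basis ι S M,
      v' i = algebraMap R S s • v i + algebraMap R S t • v j ∧
      v' j = algebraMap R S (-t) • v i + algebraMap R S s • v j ∧
      ∀ l, l ≠ i → l ≠ j → v' l = v l := by
  classical
  obtain ⟨v₁, hv₁i, hv₁⟩ := v.exists_update_of_isUnit_repr i
    (algebraMap R S s • v i + algebraMap R S t • v j)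
    (by simpa [hij.symm, Algebra.algebraMap_eq_smul_one] using hs.map (algebraMap R S))
  obtain ⟨s', hss'⟩ : ∃ s', s * s' = 1 := hs.exists_right_inv
  -- the `j`-coordinate of the second rotated vector in the basis `v₁` is a unit
  have hq : algebraMap R S (-t) • v i + algebraMap R S s • v j =
      algebraMap R S (-(t * s')) • v₁ i + algebraMap R S (s' * (s ^ 2 + t ^ 2)) • v₁ j := by
    have e₁ : -(t * s') * s = -t := by linear_combination (-t) * hss'
    have e₂ : -(t * s') * t + s' * (s ^ 2 + t ^ 2) = s := by linear_combination s * hss'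
    rw [hv₁i, hv₁ j hij.symm, smul_add, smul_smul, smul_smul, ← map_mul, ← map_mul, add_assoc,
      ← add_smul, ← map_add, e₁, e₂]
  have hs' : IsUnit s' := .of_mul_eq_one_right s hss'
  obtain ⟨v₂, hv₂j, hv₂⟩ := v₁.exists_update_of_isUnit_repr j
    (algebraMap R S (-t) • v i + algebraMap R S s • v j)
    (by
      rw [hq]
      simpa [hij, Algebra.algebraMap_eq_smul_one] using (hs'.mul hst).map (algebraMap R S))
  exact ⟨v₂, by rw [hv₂ i hij, hv₁i], hv₂j, fun l hli hlj => by rw [hv₂ l hlj, hv₁ l hli]⟩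

end Module.Basis

namespace HermitianForm

variable {A V : Type*} [Ring A] [StarRing A] [AddCommGroup V] [Module Aᵐᵒᵖ V]
  (h : HermitianForm A V) {ι : Type*}

instance : CoeFun (HermitianForm A V) fun _ => V → V → A := ⟨toFun⟩

theorem add_left (u u' v : V) : h (u + u') v = h u v + h u' v := by
  rw [h.conj_symm, h.add_right, star_add, ← h.conj_symm, ← h.conj_symm]

theorem smul_left (a : A) (u v : V) : h (op a • u) v = star a * h u v := by
  rw [h.conj_symm, h.smul_right, star_mul, ← h.conj_symm]

theorem apply_eq_zero_comm {u v : V} : h u v = 0 ↔ h v u = 0 := by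
  rw [h.conj_symm u v, star_eq_zero]

def IsOrthogonal (v : ι → V) : Prop :=
  Pairwise fun i j => h (v i) (v j) = 0

def SplitsAt (v : ι → V) (i : ι) : Prop :=
  IsUnit (h (v i) (v i)) ∧ ∀ j, j ≠ i → h (v i) (v j) = 0

variable {h} in
theorem IsOrthogonal.of_eq_off_pair {v v' : ι → V} (hv : h.IsOrthogonal v) {i j : ι}
    (hv' : ∀ l, l ≠ i → l ≠ j → v' l = v l) (hij : h (v' i) (v' j) = 0)
    (hperp : ∀ p, p = i ∨ p = j → ∀ l, l ≠ i → l ≠ j → h (v l) (v' p) = 0) :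
    h.IsOrthogonal v' := by
  intro p q hpq
  show h (v' p) (v' q) = 0
  by_cases hp : p = i ∨ p = j
  · by_cases hq : q = i ∨ q = j
    · rcases hp with rfl | rfl <;> rcases hq with rfl | rfl
      · exact absurd rfl hpq
      · exact hij
      · exact h.apply_eq_zero_comm.mp hij
      · exact absurd rfl hpq
    · obtain ⟨hqi, hqj⟩ := not_or.mp hq
      rw [hv' q hqi hqj, h.apply_eq_zero_comm]
      exact hperp p hp q hqi hqj
  · obtain ⟨hpi, hpj⟩ := not_or.mp hp
    rw [hv' p hpi hpj]
    by_cases hq : q = i ∨ q = j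
    · exact hperp q hq p hpi hpj
    · obtain ⟨hqi, hqj⟩ := not_or.mp hq
      rw [hv' q hqi hqj]
      exact hv hpq

def toDual (u : V) : Module.Dual Aᵐᵒᵖ V where
  toFun x := op (h u x)
  map_add' x y := by rw [← op_add, ← h.add_right]
  map_smul' c x := by
    rw [RingHom.id_apply, smul_eq_mul, ← op_unop c, h.smul_right, op_mul, op_unop]

@[simp] theorem toDual_apply (u x : V) : h.toDual u x = op (h u x) := rfl

theorem exists_basis_smul (v : Module.Basis ι Aᵐᵒᵖ V) (a : ι → A)
    (ha : ∀ i, IsUnit (a i)) :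
    ∃ v' : Module.Basis ι Aᵐᵒᵖ V, ∀ i j, h (v' i) (v' j) = star (a i) * h (v i) (v j) * a j :=
  ⟨v.unitsSMul fun i => (ha i).op.unit, fun i j => by
    rw [Module.Basis.unitsSMul_apply, Module.Basis.unitsSMul_apply, Units.smul_def,
      Units.smul_def, IsUnit.unit_spec, IsUnit.unit_spec, h.smul_left, h.smul_right, mul_assoc]⟩

theorem exists_basis_orthogonal_to (v : Module.Basis ι Aᵐᵒᵖ V)
    (k : ι) (hk : IsUnit (h (v k) (v k))) :
    ∃ v' : Module.Basis ι Aᵐᵒᵖ V, v' k = v k ∧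
      ∀ j, j ≠ k → h (v k) (v' j) = 0 ∧ ∃ a : A, v' j = v j + op a • v k := by
  classical
  obtain ⟨c, hc⟩ := hk
  set f : Module.Dual Aᵐᵒᵖ V := v.coord k - (h.toDual (v k)).smulRight (op (↑c⁻¹ : A))
  have hf : f (v k) = 0 := by simp [f, ← hc, ← op_mul]
  have hv' (j : ι) : v.map (LinearEquiv.transvection hf) j = v j + f (v j) • v k :=
    LinearEquiv.transvection.apply hf _
  have hfj (j : ι) (hj : j ≠ k) : f (v j) = op (-(↑c⁻¹ * h (v k) (v j))) := by
    simp [f, hj, op_mul]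
  refine ⟨_, by rw [hv', hf, zero_smul, add_zero], fun j hj => ⟨?_, _, by rw [hv', hfj j hj]⟩⟩
  rw [hv', hfj j hj, h.add_right, h.smul_right, ← hc, mul_neg, ← mul_assoc, Units.mul_inv,
    one_mul, add_neg_cancel]

section GramSchmidt

variable [IsLocalRing A] (hnd : h.Nondeg) (h2 : IsUnit (2 : A))
include hnd h2

theorem exists_isUnit_apply_self (v : Module.Basis ι Aᵐᵒᵖ V) (k : ι) :
    ∃ w, IsUnit (h w w) ∧ IsUnit (v.repr w k) ∧
      ∀ i, i ≠ k → h (v i) (v k) = 0 → h (v i) w = 0 := by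
  classical
  obtain ⟨u, hu, -⟩ := hnd ((opLinearEquiv Aᵐᵒᵖ).symm.toLinearMap ∘ₗ v.coord k)
  replace hu : ∀ x, h u x = unop (v.repr x k) := hu
  have hui (i : ι) (hi : i ≠ k) : h (v i) u = 0 := by
    rw [h.apply_eq_zero_comm, hu]; simp [hi]
  by_cases huu : IsUnit (h u u)
  · exact ⟨u, huu, by rw [hu] at huu; exact isUnit_unop.mp huu, fun i hi _ => hui i hi⟩
  by_cases hkk : IsUnit (h (v k) (v k))
  · exact ⟨v k, hkk, by simp, fun i _ hik => hik⟩
  have huk : h u (v k) = 1 := by simp [hu]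
  have hku : h (v k) u = 1 := by rw [h.conj_symm, huk, star_one]
  refine ⟨u + v k, ?_, ?_, fun i hi hik => by rw [h.add_right, hui i hi, hik, add_zero]⟩
  · -- `2 = h w w - h u u - h (v k) (v k)` for `w = u + v k`; nonunits are closed under addition
    have h2' : IsUnit (h (u + v k) (u + v k) + -h u u + -h (v k) (v k)) := by
      convert h2 using 1
      rw [h.add_left, h.add_right, h.add_right, huk, hku, ← one_add_one_eq_two]
      abel
    rcases IsLocalRing.isUnit_or_isUnit_of_isUnit_add h2' with h' | h'
    · rcases IsLocalRing.isUnit_or_isUnit_of_isUnit_add h' with h' | h'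
      · exact h'
      · exact absurd ((IsUnit.neg_iff _).mp h') huu
    · exact absurd ((IsUnit.neg_iff _).mp h') hkk
  · have hcoord : unop (v.repr (u + v k) k) = 1 + h u u := by simp [hu, add_comm]
    rw [← isUnit_unop, hcoord]
    refine (IsLocalRing.isUnit_or_isUnit_of_add_one (a := -h u u) (by abel)).resolve_left ?_
    rwa [IsUnit.neg_iff]

theorem exists_basis_splitsAt_insert [DecidableEq ι] (v : Module.Basis ι Aᵐᵒᵖ V)
    (s : Finset ι) (hv : ∀ i ∈ s, h.SplitsAt v i) (k : ι) :
    ∃ v' : Module.Basis ι Aᵐᵒᵖ V, ∀ i ∈ insert k s, h.SplitsAt v' i := by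
  obtain ⟨w, hww, hwk, hwi⟩ := h.exists_isUnit_apply_self hnd h2 v k
  obtain ⟨v₁, hv₁k, hv₁⟩ := v.exists_update_of_isUnit_repr k w hwk
  obtain ⟨v₂, hv₂k, hv₂⟩ := h.exists_basis_orthogonal_to v₁ k (hv₁k ▸ hww)
  rw [hv₁k] at hv₂k hv₂
  have hiw (i : ι) (hi : i ∈ s) (hik : i ≠ k) : h (v i) w = 0 :=
    hwi i hik ((hv i hi).2 k hik.symm)
  have hv₂i (i : ι) (hi : i ∈ s) (hik : i ≠ k) : v₂ i = v i := by
    obtain ⟨horth, a, ha⟩ := hv₂ i hik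
    rw [ha, hv₁ i hik, h.add_right, h.smul_right, h.apply_eq_zero_comm.mp (hiw i hi hik),
      zero_add] at horth
    rw [ha, hv₁ i hik, hww.mul_right_eq_zero.mp horth, op_zero, zero_smul, add_zero]
  refine ⟨v₂, fun i hi => ?_⟩
  by_cases hik : i = k
  · subst hik
    exact ⟨hv₂k ▸ hww, fun j hj => hv₂k ▸ (hv₂ j hj).1⟩
  have hi : i ∈ s := (Finset.mem_insert.mp hi).resolve_left hik
  refine ⟨hv₂i i hi hik ▸ (hv i hi).1, fun j hj => ?_⟩
  rw [hv₂i i hi hik]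
  by_cases hjk : j = k
  · rw [hjk, hv₂k]
    exact hiw i hi hik
  · obtain ⟨-, a, ha⟩ := hv₂ j hjk
    rw [ha, hv₁ j hjk, h.add_right, h.smul_right, (hv i hi).2 j hj, hiw i hi hik, zero_mul,
      add_zero]

theorem exists_basis_splitsAt [Fintype ι] (b : Module.Basis ι Aᵐᵒᵖ V) :
    ∃ v : Module.Basis ι Aᵐᵒᵖ V, ∀ i, h.SplitsAt v i := by
  classical
  have key (s : Finset ι) : ∃ v : Module.Basis ι Aᵐᵒᵖ V, ∀ i ∈ s, h.SplitsAt v i := by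
    induction s using Finset.induction_on with
    | empty => exact ⟨b, by simp⟩
    | insert k s _ ih =>
      obtain ⟨v, hv⟩ := ih
      exact h.exists_basis_splitsAt_insert hnd h2 v s hv k
  obtain ⟨v, hv⟩ := key Finset.univ
  exact ⟨v, fun i => hv i (Finset.mem_univ i)⟩

end GramSchmidt

section Lengths

variable {R : Type*} [CommRing R] [Algebra R A]

theorem exists_basis_apply_self_eq_one_of_norm_surjective (v : Module.Basis ι Aᵐᵒᵖ V)
    (hv : h.IsOrthogonal v)
    (hd : ∀ i, ∃ r : R, IsUnit r ∧ h (v i) (v i) = algebraMap R A r)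
    (hQ : ∀ r : R, IsUnit r → ∃ a : A, IsUnit a ∧ a * star a = algebraMap R A r) :
    ∃ v' : Module.Basis ι Aᵐᵒᵖ V, h.IsOrthogonal v' ∧ ∀ i, h (v' i) (v' i) = 1 := by
  choose r hr hrv using hd
  choose a ha haa using fun i => hQ ↑(hr i).unit⁻¹ (Units.isUnit _)
  obtain ⟨v', hv'⟩ := h.exists_basis_smul v (fun i => star (a i)) fun i => (ha i).star
  refine ⟨v', fun i j hij => ?_, fun i => ?_⟩
  · simp only [hv', hv hij, mul_zero, zero_mul]
  · rw [hv', star_star, hrv, ← Algebra.commutes, mul_assoc, haa, ← map_mul, IsUnit.mul_val_inv,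
      map_one]

variable (hstar : ∀ r : R, star (algebraMap R A r) = algebraMap R A r)
include hstar

theorem exists_basis_apply_self_eq_one_or_eq [IsLocalRing R] [Finite (IsLocalRing.ResidueField R)]
    (hsq : ∀ x ∈ IsLocalRing.maximalIdeal R,
      ∃ y ∈ IsLocalRing.maximalIdeal R, (1 + y) ^ 2 = 1 + x)
    {ε : R} (hεu : IsUnit ε) (hε : ¬IsSquare ε)
    (v : Module.Basis ι Aᵐᵒᵖ V) (hv : h.IsOrthogonal v)
    (hd : ∀ i, ∃ r : R, IsUnit r ∧ h (v i) (v i) = algebraMap R A r) :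
    ∃ v' : Module.Basis ι Aᵐᵒᵖ V, h.IsOrthogonal v' ∧
      ∀ i, h (v' i) (v' i) = 1 ∨ h (v' i) (v' i) = algebraMap R A ε := by
  choose r hr hrv using hd
  choose t ht htr using fun i => IsLocalRing.exists_mul_self_mul_eq_one_or_eq hsq hεu hε (hr i)
  obtain ⟨v', hv'⟩ := h.exists_basis_smul v (fun i => algebraMap R A (t i))
    fun i => (ht i).map _
  refine ⟨v', fun i j hij => ?_, fun i => ?_⟩
  · simp only [hv', hv hij, mul_zero, zero_mul]
  · rw [hv', hstar, hrv, ← Algebra.commutes, ← map_mul, ← map_mul, ← mul_assoc]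
    rcases htr i with h1 | hε'
    · exact Or.inl (by rw [h1, map_one])
    · exact Or.inr (by rw [hε'])

theorem exists_basis_rotate_apply_self_eq_one {ε s t : R} (hs : IsUnit s)
    (hst : ε * (s ^ 2 + t ^ 2) = 1)
    (v : Module.Basis ι Aᵐᵒᵖ V) (hv : h.IsOrthogonal v) {i j : ι} (hij : i ≠ j)
    (hi : h (v i) (v i) = algebraMap R A ε) (hj : h (v j) (v j) = algebraMap R A ε) :
    ∃ v' : Module.Basis ι Aᵐᵒᵖ V, h.IsOrthogonal v' ∧ h (v' i) (v' i) = 1 ∧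
      h (v' j) (v' j) = 1 ∧ ∀ l, l ≠ i → l ≠ j → v' l = v l := by
  obtain ⟨v', hv'i, hv'j, hv'⟩ :=
    v.exists_rotate (S := Aᵐᵒᵖ) hij hs (.of_mul_eq_one_right _ hst)
  simp only [MulOpposite.algebraMap_apply] at hv'i hv'j
  have hji : h (v j) (v i) = 0 := hv hij.symm
  have hgram (a b c d : R) :
      h (op (algebraMap R A a) • v i + op (algebraMap R A b) • v j)
        (op (algebraMap R A c) • v i + op (algebraMap R A d) • v j) =
        algebraMap R A ((a * c + b * d) * ε) := by
    simp only [h.add_left, h.add_right, h.smul_left, h.smul_right, hstar, hv hij, hji, hi, hj,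
      mul_zero, zero_mul, add_zero, zero_add, ← map_mul, ← map_add]
    congr 1
    ring
  have hperp (p : ι) (hp : p = i ∨ p = j) (l : ι) (hli : l ≠ i) (hlj : l ≠ j) :
      h (v l) (v' p) = 0 := by
    rcases hp with rfl | rfl <;>
      simp only [hv'i, hv'j, h.add_right, h.smul_right, hv hli, hv hlj, zero_mul, add_zero]
  have hij' : h (v' i) (v' j) = 0 := by
    rw [hv'i, hv'j, hgram, ← map_zero (algebraMap R A)]
    congr 1
    ring
  refine ⟨v', hv.of_eq_off_pair hv' hij' hperp, ?_, ?_, hv'⟩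
  · rw [hv'i, hgram, ← map_one (algebraMap R A), ← hst]
    congr 1
    ring
  · rw [hv'j, hgram, ← map_one (algebraMap R A), ← hst]
    congr 1
    ring

theorem exists_basis_apply_self_eq_one_at {ε : R}
    (hsum : ∃ s t : R, IsUnit s ∧ ε * (s ^ 2 + t ^ 2) = 1) (v : Module.Basis ι Aᵐᵒᵖ V)
    (hv : h.IsOrthogonal v) (hd : ∀ l, h (v l) (v l) = 1 ∨ h (v l) (v l) = algebraMap R A ε)
    {i k : ι} (hik : i ≠ k) :
    ∃ v' : Module.Basis ι Aᵐᵒᵖ V, h.IsOrthogonal v' ∧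
      (∀ l, h (v' l) (v' l) = 1 ∨ h (v' l) (v' l) = algebraMap R A ε) ∧
      h (v' i) (v' i) = 1 ∧ ∀ l, l ≠ i → l ≠ k → v' l = v l := by
  classical
  rcases hd i with hi | hi
  · exact ⟨v, hv, hd, hi, fun _ _ _ => rfl⟩
  rcases hd k with hk | hk
  · have hσ (l : ι) : v.reindex (Equiv.swap i k) l = v (Equiv.swap i k l) := by
      rw [Module.Basis.reindex_apply, Equiv.symm_swap]
    refine ⟨v.reindex (Equiv.swap i k), fun p q hpq => ?_, fun l => ?_, ?_, fun l hli hlk => ?_⟩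
    · simpa only [hσ] using hv ((Equiv.swap i k).injective.ne hpq)
    · simpa only [hσ] using hd _
    · rwa [hσ, Equiv.swap_apply_left]
    · rw [hσ, Equiv.swap_apply_of_ne_of_ne hli hlk]
  · obtain ⟨s, t, hs, hst⟩ := hsum
    obtain ⟨v', hv', hi', hk', hother⟩ :=
      h.exists_basis_rotate_apply_self_eq_one hstar hs hst v hv hik hi hk
    refine ⟨v', hv', fun l => ?_, hi', hother⟩
    by_cases hli : l = i
    · exact Or.inl (hli ▸ hi')
    by_cases hlk : l = k
    · exact Or.inl (hlk ▸ hk')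
    rw [hother l hli hlk]
    exact hd l

theorem exists_basis_apply_self_eq_one_of_ne [Fintype ι] {ε : R}
    (hsum : ∃ s t : R, IsUnit s ∧ ε * (s ^ 2 + t ^ 2) = 1) (v : Module.Basis ι Aᵐᵒᵖ V)
    (hv : h.IsOrthogonal v) (hd : ∀ l, h (v l) (v l) = 1 ∨ h (v l) (v l) = algebraMap R A ε)
    (k : ι) :
    ∃ v' : Module.Basis ι Aᵐᵒᵖ V, h.IsOrthogonal v' ∧
      (∀ l, h (v' l) (v' l) = 1 ∨ h (v' l) (v' l) = algebraMap R A ε) ∧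
      ∀ i, i ≠ k → h (v' i) (v' i) = 1 := by
  classical
  have key (s : Finset ι) (hks : k ∉ s) : ∃ v' : Module.Basis ι Aᵐᵒᵖ V, h.IsOrthogonal v' ∧
      (∀ l, h (v' l) (v' l) = 1 ∨ h (v' l) (v' l) = algebraMap R A ε) ∧
      ∀ i ∈ s, h (v' i) (v' i) = 1 := by
    induction s using Finset.induction_on with
    | empty => exact ⟨v, hv, hd, by simp⟩
    | insert i s his ih =>
      obtain ⟨v₁, hv₁, hd₁, hs₁⟩ := ih fun hmem => hks (Finset.mem_insert_of_mem hmem)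
      have hik : i ≠ k := fun hik => hks (hik ▸ Finset.mem_insert_self i s)
      obtain ⟨v₂, hv₂, hd₂, hi₂, hother⟩ :=
        h.exists_basis_apply_self_eq_one_at hstar hsum v₁ hv₁ hd₁ hik
      refine ⟨v₂, hv₂, hd₂, fun l hl => ?_⟩
      rcases Finset.mem_insert.mp hl with rfl | hl
      · exact hi₂
      · rw [hother l (ne_of_mem_of_not_mem hl his)
          fun hlk => hks (hlk ▸ Finset.mem_insert_of_mem hl)]
        exact hs₁ l hl
  obtain ⟨v', hv', hd', hone⟩ := key (Finset.univ.erase k) (Finset.notMem_erase k _)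
  exact ⟨v', hv', hd', fun i hi => hone i (Finset.mem_erase.mpr ⟨hi, Finset.mem_univ i⟩)⟩

end Lengths

end HermitianForm

/-- Theorem 3.6: `V` has an orthogonal basis with all lengths `1` except possibly
the last; the last length is `1` when the norm map `Q : A* → R*` is surjective,
and lies in `{1, ε}` when `Q(A*) = R*²`. -/
theorem stmt_10 {A V : Type*} [Ring A] [StarRing A] [IsLocalRing A]
    [AddCommGroup V] [Module Aᵐᵒᵖ V]
    (h2 : IsUnit (2 : A))
    (R : Type*) [CommRing R] [IsLocalRing R] [Algebra R A]
    (hfix : ∀ a : A, star a = a ↔ a ∈ Set.range (algebraMap R A))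
    [Finite (IsLocalRing.ResidueField R)]
    (hodd : Odd (Nat.card (IsLocalRing.ResidueField R)))
    (hsq : ∀ x ∈ IsLocalRing.maximalIdeal R,
      ∃ y ∈ IsLocalRing.maximalIdeal R, (1 + y) ^ 2 = 1 + x)
    (ε : R) (hεu : IsUnit ε) (hεnsq : ¬ ∃ u : R, u ^ 2 = ε)
    (m : ℕ) (hm : 1 ≤ m) (b : Module.Basis (Fin m) Aᵐᵒᵖ V)
    (h : HermitianForm A V) (hnd : h.Nondeg) :
    ∃ v : Module.Basis (Fin m) Aᵐᵒᵖ V,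
      (∀ i j : Fin m, i ≠ j → h.toFun (v i) (v j) = 0) ∧
      (∀ i : Fin m, (i : ℕ) < m - 1 → h.toFun (v i) (v i) = 1) ∧
      ((∀ r : R, IsUnit r → ∃ a : A, IsUnit a ∧ a * star a = algebraMap R A r) →
        h.toFun (v ⟨m - 1, by omega⟩) (v ⟨m - 1, by omega⟩) = 1) ∧
      ((∀ a : A, IsUnit a → ∃ u : R, IsUnit u ∧ a * star a = algebraMap R A (u ^ 2)) →
        (h.toFun (v ⟨m - 1, by omega⟩) (v ⟨m - 1, by omega⟩) = 1 ∨
         h.toFun (v ⟨m - 1, by omega⟩) (v ⟨m - 1, by omega⟩) = algebraMap R A ε)) := by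
  have hstar (r : R) : star (algebraMap R A r) = algebraMap R A r := (hfix _).mpr ⟨r, rfl⟩
  have hε : ¬IsSquare ε := fun ⟨u, hu⟩ => hεnsq ⟨u, by rw [sq, hu]⟩
  obtain ⟨v₀, hv₀⟩ := h.exists_basis_splitsAt hnd h2 b
  have horth : h.IsOrthogonal v₀ := fun i j hij => (hv₀ i).2 j hij.symm
  have hd (i : Fin m) : ∃ r : R, IsUnit r ∧ h (v₀ i) (v₀ i) = algebraMap R A r :=
    exists_isUnit_algebraMap_eq_of_star_eq hfix (hv₀ i).1 (h.conj_symm _ _).symm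
  set last : Fin m := ⟨m - 1, by omega⟩
  by_cases hQ : ∀ r : R, IsUnit r → ∃ a : A, IsUnit a ∧ a * star a = algebraMap R A r
  · obtain ⟨v, hv, hv1⟩ := h.exists_basis_apply_self_eq_one_of_norm_surjective v₀ horth hd hQ
    exact ⟨v, hv, fun i _ => hv1 i, fun _ => hv1 last, fun _ => Or.inl (hv1 last)⟩
  · obtain ⟨v₁, hv₁, hd₁⟩ := h.exists_basis_apply_self_eq_one_or_eq hstar hsq hεu hε v₀ horth hd
    obtain ⟨v, hv, hdv, hv1⟩ := h.exists_basis_apply_self_eq_one_of_ne hstar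
      (IsLocalRing.exists_isUnit_mul_sq_add_sq_eq_one hsq hodd hεu) v₁ hv₁ hd₁ last
    refine ⟨v, hv, fun i hi => hv1 i fun he => ?_, fun hQ' => absurd hQ' hQ, fun _ => hdv last⟩
    rw [he] at hi
    exact lt_irrefl _ hi
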